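/- arXiv:1007.4040 — 2 statements merged into one kernel-verified Lean document; each statement's English description precedes it below -/
import Mathlib

section
/- Canonical answer sets of a dl-program are minimal: if I is a canonical answer set of K = (O,P), then there is no canonical answer set I₁ of K with I₁ ⊊ I. -/
namespace DLP

/-- The three dl-atom input operators ⊕, ⊙, ⊖. -/
inductive Op | oplus | odot | ominus

/-- An abstract dl-atom `DL[S₁ op₁ p₁, …; Q](t)`: a list of inputs together with
the entailment check `O ∪ A ⊨ Q(t)` applied to a set of (possibly negated) assertions. -/
structure DLA (Conc Pred Arg : Type) where
  inputs : List (Conc × Op × Pred)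
  entails : Set (Conc × Arg × Bool) → Prop

variable {Conc Pred Arg : Type}

/-- Atoms of the Herbrand base: predicate applied to an argument tuple. -/
abbrev Atom (Pred Arg : Type) := Pred × Arg

/-- Interpretations are subsets of the Herbrand base. -/
abbrev Interp (Pred Arg : Type) := Set (Atom Pred Arg)

/-- Extension of a predicate under an interpretation. -/
def extOf (I : Interp Pred Arg) : Pred → Set Arg := fun p => {e | (p, e) ∈ I}

/-- The assertions contributed by one input entry, given predicate extensions. -/
def contrib (ext : Pred → Set Arg) : Conc × Op × Pred → Set (Conc × Arg × Bool)
  | (S, Op.oplus, p) => {x | ∃ e ∈ ext p, x = (S, e, true)}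
  | (S, Op.odot, p) => {x | ∃ e ∈ ext p, x = (S, e, false)}
  | (S, Op.ominus, p) => {x | ∃ e, e ∉ ext p ∧ x = (S, e, false)}

/-- Evaluate a dl-atom on given predicate extensions. -/
def DLA.eval (A : DLA Conc Pred Arg) (ext : Pred → Set Arg) : Prop :=
  A.entails {x | ∃ c ∈ A.inputs, x ∈ contrib ext c}

/-- `I ⊨_O A` for a dl-atom `A`. -/
def DLA.sat (A : DLA Conc Pred Arg) (I : Interp Pred Arg) : Prop := A.eval (extOf I)

/-- A dl-atom is monotonic (relative to the program) if `I ⊨_O A` and `I ⊆ I'` imply `I' ⊨_O A`. -/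
def DLA.Mono (A : DLA Conc Pred Arg) : Prop :=
  ∀ ⦃I J : Interp Pred Arg⦄, I ⊆ J → A.sat I → A.sat J

/-- A body element: an ordinary atom or a dl-atom. -/
abbrev BodyElem (Conc Pred Arg : Type) := Atom Pred Arg ⊕ DLA Conc Pred Arg

/-- Satisfaction of a body element: membership for atoms, dl-satisfaction for dl-atoms. -/
def satB (I : Interp Pred Arg) : BodyElem Conc Pred Arg → Prop
  | Sum.inl a => a ∈ I
  | Sum.inr d => d.sat I

/-- A dl-rule `head ← Pos, not Neg`. -/
structure Rule (Conc Pred Arg : Type) where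
  head : Atom Pred Arg
  pos : Set (BodyElem Conc Pred Arg)
  neg : Set (BodyElem Conc Pred Arg)

/-- A dl-program: a set of dl-rules (the ontology `O` is folded into the
entailment relation carried by each dl-atom). -/
structure Prog (Conc Pred Arg : Type) where
  rules : Set (Rule Conc Pred Arg)

/-- `I` satisfies the body of rule `r` relative to `O`. -/
def satBody (I : Interp Pred Arg) (r : Rule Conc Pred Arg) : Prop :=
  (∀ b ∈ r.pos, satB I b) ∧ (∀ b ∈ r.neg, ¬ satB I b)

/-- `I` is a model of the dl-program. -/
def isModel (P : Prog Conc Pred Arg) (I : Interp Pred Arg) : Prop :=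
  ∀ r ∈ P.rules, satBody I r → r.head ∈ I

/-- `I` is a supported model of the dl-program. -/
def Supported (P : Prog Conc Pred Arg) (I : Interp Pred Arg) : Prop :=
  isModel P I ∧ ∀ h ∈ I, ∃ r ∈ P.rules, r.head = h ∧ satBody I r

/-- `I` satisfies the completion `COMP(K)` relative to `O`. -/
def satComp (P : Prog Conc Pred Arg) (I : Interp Pred Arg) : Prop :=
  ∀ h : Atom Pred Arg, h ∈ I ↔ ∃ r ∈ P.rules, r.head = h ∧ satBody I r

/-- A positive dl-program: no negation as failure, and all occurring dl-atoms monotonic. -/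
def Positive (P : Prog Conc Pred Arg) : Prop :=
  (∀ r ∈ P.rules, r.neg = (∅ : Set (BodyElem Conc Pred Arg))) ∧
  (∀ r ∈ P.rules, ∀ d : DLA Conc Pred Arg, Sum.inr d ∈ r.pos ∪ r.neg → d.Mono)

/-- One-step consequence operator `γ_K`. -/
def gamma (P : Prog Conc Pred Arg) (J : Interp Pred Arg) : Interp Pred Arg :=
  {h | ∃ r ∈ P.rules, r.head = h ∧ ∀ b ∈ r.pos, satB J b}

/-- Least fixed point of the one-step consequence operator (Knaster–Tarski form). -/
def lfpGamma (P : Prog Conc Pred Arg) : Interp Pred Arg :=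
  ⋂₀ {J | gamma P J ⊆ J}

/-- The weak dl-transform `wP_O^I`. -/
def weakReduct (P : Prog Conc Pred Arg) (I : Interp Pred Arg) : Prog Conc Pred Arg :=
  ⟨{r' | ∃ r ∈ P.rules,
      (∀ d : DLA Conc Pred Arg, Sum.inr d ∈ r.pos → d.sat I) ∧
      (∀ b ∈ r.neg, ¬ satB I b) ∧
      r' = ⟨r.head, {b ∈ r.pos | ∃ a, b = Sum.inl a}, ∅⟩}⟩

/-- The strong dl-transform `sP_O^I`. -/
def strongReduct (P : Prog Conc Pred Arg) (I : Interp Pred Arg) : Prog Conc Pred Arg :=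
  ⟨{r' | ∃ r ∈ P.rules,
      (∀ d : DLA Conc Pred Arg, Sum.inr d ∈ r.pos → ¬ d.Mono → d.sat I) ∧
      (∀ b ∈ r.neg, ¬ satB I b) ∧
      r' = ⟨r.head,
            {b ∈ r.pos | (∃ a, b = Sum.inl a) ∨ ∃ d : DLA Conc Pred Arg, b = Sum.inr d ∧ d.Mono},
            ∅⟩}⟩

/-- `I` is a weak answer set: the least model of the weak dl-transform. -/
def WeakAS (P : Prog Conc Pred Arg) (I : Interp Pred Arg) : Prop :=
  IsLeast {J | isModel (weakReduct P I) J} I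

/-- `I` is a strong answer set: the least model of the strong dl-transform. -/
def StrongAS (P : Prog Conc Pred Arg) (I : Interp Pred Arg) : Prop :=
  IsLeast {J | isModel (strongReduct P I) J} I

/-- A loop of a directed graph: a nonempty vertex set through which a cycle passes,
visiting only and all its nodes (i.e., strongly connected via nonempty paths inside `L`). -/
def IsLoop {α : Type} (E : α → α → Prop) (L : Set α) : Prop :=
  L.Nonempty ∧ ∀ u ∈ L, ∀ v ∈ L,
    Relation.TransGen (fun a b => E a b ∧ a ∈ L ∧ b ∈ L) u v

/-- A maximal loop. -/
def MaxLoop {α : Type} (E : α → α → Prop) (L : Set α) : Prop :=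
  IsLoop E L ∧ ∀ L', IsLoop E L' → L ⊆ L' → L' = L

/-- A terminating loop: a maximal loop from which no other maximal loop is reachable. -/
def TermLoop {α : Type} (E : α → α → Prop) (L : Set α) : Prop :=
  MaxLoop E L ∧ ∀ L', MaxLoop E L' → L' ≠ L →
    ∀ u ∈ L, ∀ v ∈ L', ¬ Relation.ReflTransGen E u v

/-- Edge relation of the weak positive dependency graph. -/
def edgeWeak (P : Prog Conc Pred Arg) (u v : Atom Pred Arg) : Prop :=
  ∃ r ∈ P.rules, r.head = u ∧ Sum.inl v ∈ r.pos

/-- The dl-atom mentions predicate `q` among its input predicates. -/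
def mentionsPred (d : DLA Conc Pred Arg) (q : Pred) : Prop :=
  ∃ S op, (S, op, q) ∈ d.inputs

/-- Edge relation of the strong positive dependency graph. -/
def edgeStrong (P : Prog Conc Pred Arg) (u v : Atom Pred Arg) : Prop :=
  ∃ r ∈ P.rules, r.head = u ∧
    (Sum.inl v ∈ r.pos ∨
     ∃ d : DLA Conc Pred Arg, Sum.inr d ∈ r.pos ∧ d.Mono ∧ mentionsPred d v.1)

/-- Satisfaction of the weak loop formula `wLF(L,K)` by `I` relative to `O`. -/
def satWLF (P : Prog Conc Pred Arg) (I : Interp Pred Arg) (L : Set (Atom Pred Arg)) : Prop :=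
  (∃ a ∈ L, a ∈ I) →
    ∃ r ∈ P.rules, r.head ∈ L ∧ (∀ a ∈ L, Sum.inl a ∉ r.pos) ∧ satBody I r

/-- Predicate extensions used by the irrelevant formula `IF(A,L)`: predicates occurring
in `L` are renamed to `p_L`, whose extension (under the extension `I'` of `I`) consists of
the `p`-atoms of `I \ L`; other predicates keep their extension in `I`. -/
def extIF (I L : Interp Pred Arg) : Pred → Set Arg := fun p =>
  {e | ((∃ e', (p, e') ∈ L) ∧ (p, e) ∈ I \ L) ∨ ((¬ ∃ e', (p, e') ∈ L) ∧ (p, e) ∈ I)}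

/-- `I' ⊨_O IF(A,L)`: the irrelevant formula of `A` relative to `L`, evaluated under
the extension `I'` of `I` satisfying the renamed-predicate axioms. -/
def satIF (A : DLA Conc Pred Arg) (I L : Interp Pred Arg) : Prop :=
  A.eval (extIF I L)

/-- Satisfaction of `γ(A, L)`-transformed positive body elements
(monotonic dl-atoms are replaced by their irrelevant formulas). -/
def satGammaB (I L : Interp Pred Arg) : BodyElem Conc Pred Arg → Prop
  | Sum.inl a => a ∈ I
  | Sum.inr d => (d.Mono → satIF d I L) ∧ (¬ d.Mono → d.sat I)

/-- Satisfaction of the strong loop formula `sLF(L,K)` by (the extension of) `I`. -/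
def satSLF (P : Prog Conc Pred Arg) (I : Interp Pred Arg) (L : Set (Atom Pred Arg)) : Prop :=
  (∃ a ∈ L, a ∈ I) →
    ∃ r ∈ P.rules, r.head ∈ L ∧ (∀ a ∈ L, Sum.inl a ∉ r.pos) ∧
      (∀ b ∈ r.pos, satGammaB I L b) ∧ (∀ b ∈ r.neg, ¬ satB I b)

/-- `v` is a positive (nonmonotonic) dependency of dl-atom `d`. -/
def posDep (d : DLA Conc Pred Arg) (v : Atom Pred Arg) : Prop :=
  ∃ I : Interp Pred Arg, ¬ d.sat I ∧ d.sat (I ∪ {v})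

/-- `v` is a negative (nonmonotonic) dependency of dl-atom `d`. -/
def negDep (d : DLA Conc Pred Arg) (v : Atom Pred Arg) : Prop :=
  ∃ I : Interp Pred Arg, d.sat I ∧ ¬ d.sat (I ∪ {v})

/-- Edge relation of the canonical dependency graph. -/
def edgeCanon (P : Prog Conc Pred Arg) (u v : Atom Pred Arg) : Prop :=
  ∃ r ∈ P.rules, r.head = u ∧
    ((∃ b ∈ r.pos, ∃ I : Interp Pred Arg, ¬ satB I b ∧ satB (I ∪ {v}) b) ∨
     (∃ b ∈ r.neg, ∃ I : Interp Pred Arg, satB I b ∧ ¬ satB (I ∪ {v}) b))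

/-- Predicate extensions for the positive canonical irrelevant formula `pCF(A,L)`:
only predicates having an atom in `L` that is a positive dependency of `A` are renamed. -/
def extPCF (d : DLA Conc Pred Arg) (I L : Interp Pred Arg) : Pred → Set Arg := fun p =>
  {e | ((∃ e', (p, e') ∈ L ∧ posDep d (p, e')) ∧ (p, e) ∈ I \ L) ∨
       ((¬ ∃ e', (p, e') ∈ L ∧ posDep d (p, e')) ∧ (p, e) ∈ I)}

/-- Predicate extensions for the negative canonical irrelevant formula `nCF(A,L)`. -/
def extNCF (d : DLA Conc Pred Arg) (I L : Interp Pred Arg) : Pred → Set Arg := fun p =>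
  {e | ((∃ e', (p, e') ∈ L ∧ negDep d (p, e')) ∧ (p, e) ∈ I \ L) ∨
       ((¬ ∃ e', (p, e') ∈ L ∧ negDep d (p, e')) ∧ (p, e) ∈ I)}

/-- `I' ⊨_O pCF(A,L)`. -/
def satPCF (d : DLA Conc Pred Arg) (I L : Interp Pred Arg) : Prop := d.eval (extPCF d I L)

/-- `I' ⊨_O nCF(A,L)`. -/
def satNCF (d : DLA Conc Pred Arg) (I L : Interp Pred Arg) : Prop := d.eval (extNCF d I L)

/-- `δ₁(A,L)`: nonmonotonic dl-atoms are replaced by `pCF(A,L)`; otherwise `γ(A,L)`. -/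
def satDelta1 (I L : Interp Pred Arg) : BodyElem Conc Pred Arg → Prop
  | Sum.inl a => a ∈ I
  | Sum.inr d => (¬ d.Mono → satPCF d I L) ∧ (d.Mono → satIF d I L)

/-- `δ₂(B,L)`: nonmonotonic dl-atoms are replaced by `nCF(B,L)`; otherwise unchanged. -/
def satDelta2 (I L : Interp Pred Arg) : BodyElem Conc Pred Arg → Prop
  | Sum.inl a => a ∈ I
  | Sum.inr d => (¬ d.Mono → satNCF d I L) ∧ (d.Mono → d.sat I)

/-- Satisfaction of the canonical loop formula `cLF(L,M,K)` by (the extension of) `I`. -/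
def satCLF (P : Prog Conc Pred Arg) (I M : Interp Pred Arg) (L : Set (Atom Pred Arg)) : Prop :=
  (∃ a ∈ L, a ∈ I) →
    ∃ r ∈ P.rules, r.head ∈ L ∧ (∀ a ∈ L, Sum.inl a ∉ r.pos) ∧ satBody M r ∧
      (∀ b ∈ r.pos, satDelta1 I L b) ∧ (∀ b ∈ r.neg, ¬ satDelta2 I L b)

/-- `I` is a canonical answer set of the dl-program. -/
def CanonAS (P : Prog Conc Pred Arg) (I : Interp Pred Arg) : Prop :=
  satComp P I ∧ ∀ L, IsLoop (edgeCanon P) L → satCLF P I I L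

/-- A normal logic program: all body elements are ordinary atoms. -/
def Normal (P : Prog Conc Pred Arg) : Prop :=
  ∀ r ∈ P.rules, ∀ b ∈ r.pos ∪ r.neg, ∃ a : Atom Pred Arg, b = Sum.inl a

/-- The Gelfond–Lifschitz-style reduct: delete rules with a satisfied negated body
member, and delete all negated members from remaining rules. -/
def glReduct (P : Prog Conc Pred Arg) (I : Interp Pred Arg) : Prog Conc Pred Arg :=
  ⟨{r' | ∃ r ∈ P.rules, (∀ b ∈ r.neg, ¬ satB I b) ∧ r' = ⟨r.head, r.pos, ∅⟩}⟩


/-!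
Suppose `I₁ ⊊ I` are canonical answer sets and put `D = I \ I₁`. Each `a ∈ D` has a supporting
rule in `I` whose body fails in `I₁`, so some body member switches when a single atom of `D` is
added: a canonical edge from `a` into `D`. Hence `D` contains a loop `L` that no canonical edge
leaves towards `D`. The loop formula of `I` for `L` yields a rule with head in `L` whose body holds
once the canonical irrelevant formulas evaluate its dl-atoms at `I` minus some `S ⊆ L`. An atom
on which a body member switches between `I₁` and `I \ S` would be an edge from `L` into `D \ S`,
leaving `L`; so the body holds in `I₁`, and the completion for `I₁` puts the head, an atom of `D`,
into `I₁`.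
-/

/-- Adding `v` to some set can switch `Q` from false to true: the common shape of the
dependencies `posDep`, `negDep` and of the edges of the canonical dependency graph. -/
def Toggles {α : Type*} (Q : Set α → Prop) (v : α) : Prop :=
  ∃ J : Set α, ¬ Q J ∧ Q (J ∪ {v})

section Toggles

variable {α : Type*} [Finite α] {Q : Set α → Prop}

/-- Take `X` minimal with `A ⊆ X ⊆ B` and `Q X`; any `v ∈ X \ A` toggles `Q` at `X \ {v}`. -/
theorem exists_toggles_of_subset {A B : Set α} (hAB : A ⊆ B) (hA : ¬ Q A) (hB : Q B) :
    ∃ v ∈ B \ A, Toggles Q v := by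
  obtain ⟨X, hXB, ⟨hAX, hX⟩, hmin⟩ :=
    exists_minimal_le_of_wellFoundedLT (fun X => A ⊆ X ∧ Q X) B ⟨hAB, hB⟩
  obtain ⟨v, hvX, hvA⟩ : ∃ v ∈ X, v ∉ A :=
    Set.not_subset.1 fun hXA => hA (by rwa [hAX.antisymm hXA])
  refine ⟨v, ⟨hXB hvX, hvA⟩, X \ {v}, fun hQ => ?_, ?_⟩
  · have hAXv : A ⊆ X \ {v} := fun x hx => ⟨hAX hx, fun hxv => hvA (hxv ▸ hx)⟩
    exact (hmin (y := X \ {v}) ⟨hAXv, hQ⟩ Set.sdiff_subset hvX).2 rfl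
  · rwa [Set.sdiff_union_self, Set.union_eq_left.2 (Set.singleton_subset_iff.2 hvX)]

theorem holds_of_diff_of_toggles_mem {I I₁ L S : Set α} (h₁ : I₁ ⊆ I) (hL : L ⊆ I \ I₁)
    (hSL : S ⊆ L) (hQ : Q (I \ S)) (hS : ∀ v ∈ L, Toggles Q v → v ∈ S)
    (hclosed : ∀ v ∈ I \ I₁, Toggles Q v → v ∈ L) : Q I₁ := by
  by_contra hQ₁
  have hI₁S : I₁ ⊆ I \ S := fun x hx => ⟨h₁ hx, fun hxS => (hL (hSL hxS)).2 hx⟩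
  obtain ⟨v, ⟨⟨hvI, hvS⟩, hvI₁⟩, hv⟩ := exists_toggles_of_subset hI₁S hQ₁ hQ
  exact hvS (hS v (hclosed v ⟨hvI, hvI₁⟩ hv) hv)

end Toggles

/-- A terminal strongly connected component of the subgraph induced on `D`. -/
theorem exists_isLoop_forall_edge_mem {α : Type} [Finite α] (E : α → α → Prop) {D : Set α}
    (hD : D.Nonempty) (hsucc : ∀ u ∈ D, ∃ v ∈ D, E u v) :
    ∃ L ⊆ D, IsLoop E L ∧ ∀ u ∈ L, ∀ v ∈ D, E u v → v ∈ L := by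
  let Closed : Set α → Prop :=
    fun L => L.Nonempty ∧ L ⊆ D ∧ ∀ u ∈ L, ∀ v ∈ D, E u v → v ∈ L
  obtain ⟨L, -, ⟨hLne, hLD, hLcl⟩, hmin⟩ :=
    exists_minimal_le_of_wellFoundedLT Closed D ⟨hD, subset_rfl, fun _ _ _ hv _ => hv⟩
  let EL : α → α → Prop := fun a b => E a b ∧ a ∈ L ∧ b ∈ L
  have hreach : ∀ u ∈ L, ∀ v ∈ L, Relation.ReflTransGen EL u v := by
    intro u hu
    let R : Set α := {v | Relation.ReflTransGen EL u v}
    have hRL : R ⊆ L := fun v hv => by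
      induction hv with
      | refl => exact hu
      | tail _ hstep => exact hstep.2.2
    have hR : Closed R := ⟨⟨u, .refl⟩, hRL.trans hLD,
      fun w hw x hx hwx => hw.tail ⟨hwx, hRL hw, hLcl w (hRL hw) x hx hwx⟩⟩
    exact hmin hR hRL
  refine ⟨L, hLD, ⟨hLne, fun u hu v hv => ?_⟩, hLcl⟩
  obtain ⟨w, hwD, huw⟩ := hsucc u (hLD hu)
  have hwL := hLcl u hu w hwD huw
  exact .head' ⟨huw, hu, hwL⟩ (hreach w hwL v hv)

theorem extOf_diff_sep (I L : Interp Pred Arg) (C : Pred → Prop) :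
    (fun p => {e | (C p ∧ (p, e) ∈ I \ L) ∨ (¬ C p ∧ (p, e) ∈ I)})
      = extOf (I \ {x ∈ L | C x.1}) := by
  funext p; ext e
  by_cases hC : C p <;> simp [extOf, hC]

theorem satIF_iff {d : DLA Conc Pred Arg} {I L : Interp Pred Arg} :
    satIF d I L ↔ d.sat (I \ L) := by
  have hL : {x ∈ L | ∃ e', (x.1, e') ∈ L} = L :=
    Set.sep_eq_self_iff_mem_true.2 fun x hx => ⟨x.2, hx⟩
  have h := extOf_diff_sep I L (fun p => ∃ e', (p, e') ∈ L)
  rw [hL] at h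
  exact Iff.of_eq (congrArg d.eval h)

theorem satPCF_iff {d : DLA Conc Pred Arg} {I L : Interp Pred Arg} :
    satPCF d I L ↔ d.sat (I \ {x ∈ L | ∃ e', (x.1, e') ∈ L ∧ posDep d (x.1, e')}) :=
  Iff.of_eq <| congrArg d.eval <|
    extOf_diff_sep I L fun p => ∃ e', (p, e') ∈ L ∧ posDep d (p, e')

theorem satNCF_iff {d : DLA Conc Pred Arg} {I L : Interp Pred Arg} :
    satNCF d I L ↔ d.sat (I \ {x ∈ L | ∃ e', (x.1, e') ∈ L ∧ negDep d (x.1, e')}) :=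
  Iff.of_eq <| congrArg d.eval <|
    extOf_diff_sep I L fun p => ∃ e', (p, e') ∈ L ∧ negDep d (p, e')

theorem exists_renaming_of_satDelta1 {I L : Interp Pred Arg} {b : BodyElem Conc Pred Arg}
    (hb : ∀ a ∈ L, b ≠ Sum.inl a) (h : satDelta1 I L b) :
    ∃ S ⊆ L, satB (I \ S) b ∧ ∀ v ∈ L, Toggles (satB · b) v → v ∈ S := by
  cases b with
  | inl a =>
    refine ⟨∅, Set.empty_subset _, by simpa [satDelta1, satB] using h,
      fun v hv ⟨J, hJ, hJv⟩ => ?_⟩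
    obtain rfl : a = v := by simp_all [satB]
    exact absurd rfl (hb a hv)
  | inr d =>
    by_cases hd : d.Mono
    · exact ⟨L, subset_rfl, satIF_iff.1 (h.2 hd), fun v hv _ => hv⟩
    · exact ⟨_, Set.sep_subset _ _, satPCF_iff.1 (h.1 hd),
        fun v hv ht => ⟨hv, v.2, hv, ht⟩⟩

theorem exists_renaming_of_not_satDelta2 {I L : Interp Pred Arg}
    {b : BodyElem Conc Pred Arg} (h : ¬ satDelta2 I L b) :
    ∃ S ⊆ L, ¬ satB (I \ S) b ∧
      ∀ v ∈ L, Toggles (fun J => ¬ satB J b) v → v ∈ S := by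
  cases b with
  | inl a =>
    refine ⟨∅, Set.empty_subset _, by simpa [satDelta2, satB] using h,
      fun v _ ⟨J, hJ, hJv⟩ => ?_⟩
    simp_all [satB]
  | inr d =>
    by_cases hd : d.Mono
    · refine ⟨∅, Set.empty_subset _, by simpa [satDelta2, satB, hd] using h,
        fun v _ ⟨J, hJ, hJv⟩ => absurd (hd Set.subset_union_left (not_not.1 hJ)) hJv⟩
    · refine ⟨_, Set.sep_subset _ _, fun hs => h ⟨fun _ => satNCF_iff.2 hs, (absurd · hd)⟩,
        fun v hv ⟨J, hJ, hJv⟩ => ⟨hv, v.2, hv, J, not_not.1 hJ, hJv⟩⟩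

theorem edgeCanon_of_toggles_pos {K : Prog Conc Pred Arg} {r : Rule Conc Pred Arg}
    {b : BodyElem Conc Pred Arg} {v : Atom Pred Arg} (hr : r ∈ K.rules) (hb : b ∈ r.pos)
    (hv : Toggles (satB · b) v) : edgeCanon K r.head v :=
  let ⟨J, hJ, hJv⟩ := hv
  ⟨r, hr, rfl, .inl ⟨b, hb, J, hJ, hJv⟩⟩

theorem edgeCanon_of_toggles_neg {K : Prog Conc Pred Arg} {r : Rule Conc Pred Arg}
    {b : BodyElem Conc Pred Arg} {v : Atom Pred Arg} (hr : r ∈ K.rules) (hb : b ∈ r.neg)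
    (hv : Toggles (fun J => ¬ satB J b) v) : edgeCanon K r.head v :=
  let ⟨J, hJ, hJv⟩ := hv
  ⟨r, hr, rfl, .inr ⟨b, hb, J, not_not.1 hJ, hJv⟩⟩

theorem exists_edgeCanon_of_mem_diff [Finite (Atom Pred Arg)] {K : Prog Conc Pred Arg}
    {I I₁ : Interp Pred Arg} (hI : satComp K I) (hI₁ : satComp K I₁) (hsub : I₁ ⊆ I)
    {a : Atom Pred Arg} (ha : a ∈ I \ I₁) : ∃ v ∈ I \ I₁, edgeCanon K a v := by
  obtain ⟨r, hr, rfl, hpos, hneg⟩ := (hI a).1 ha.1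
  have hr₁ : ¬ satBody I₁ r := fun hb => ha.2 ((hI₁ _).2 ⟨r, hr, rfl, hb⟩)
  simp only [satBody, not_and_or, not_forall, not_not] at hr₁
  rcases hr₁ with ⟨b, hb, hbI₁⟩ | ⟨b, hb, hbI₁⟩
  · obtain ⟨v, hv, ht⟩ := exists_toggles_of_subset (Q := (satB · b)) hsub hbI₁ (hpos b hb)
    exact ⟨v, hv, edgeCanon_of_toggles_pos hr hb ht⟩
  · obtain ⟨v, hv, ht⟩ :=
      exists_toggles_of_subset (Q := fun J => ¬ satB J b) hsub (not_not.2 hbI₁) (hneg b hb)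
    exact ⟨v, hv, edgeCanon_of_toggles_neg hr hb ht⟩

/-- Canonical answer sets are minimal: no canonical answer set is a
proper subset of another. -/
theorem stmt15 {Conc Pred Arg : Type} [Fintype Pred] [Fintype Arg]
    (K : Prog Conc Pred Arg) (I : Interp Pred Arg) (h : CanonAS K I) :
    ¬ ∃ I₁ : Interp Pred Arg, CanonAS K I₁ ∧ I₁ ⊂ I := by
  rintro ⟨I₁, ⟨hI₁, -⟩, hsub⟩
  obtain ⟨hI, hloop⟩ := h
  obtain ⟨L, hLD, hL, hclosed⟩ := exists_isLoop_forall_edge_mem (edgeCanon K)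
    (Set.sdiff_nonempty.2 hsub.2)
    fun a ha => exists_edgeCanon_of_mem_diff hI hI₁ hsub.1 ha
  obtain ⟨a, ha⟩ := hL.1
  obtain ⟨r, hr, hrL, hnoL, -, hpos, hneg⟩ := hloop L hL ⟨a, ha, (hLD ha).1⟩
  have hbody : satBody I₁ r := by
    refine ⟨fun b hb => ?_, fun b hb => ?_⟩
    · obtain ⟨S, hSL, hS, hSmem⟩ :=
        exists_renaming_of_satDelta1 (fun a ha hba => hnoL a ha (hba ▸ hb)) (hpos b hb)
      exact holds_of_diff_of_toggles_mem (Q := (satB · b)) hsub.1 hLD hSL hS hSmem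
        fun v hv ht => hclosed _ hrL v hv (edgeCanon_of_toggles_pos hr hb ht)
    · obtain ⟨S, hSL, hS, hSmem⟩ := exists_renaming_of_not_satDelta2 (hneg b hb)
      exact holds_of_diff_of_toggles_mem (Q := fun J => ¬ satB J b) hsub.1 hLD hSL hS hSmem
        fun v hv ht => hclosed _ hrL v hv (edgeCanon_of_toggles_neg hr hb ht)
  exact (hLD hrL).2 ((hI₁ r.head).2 ⟨r, hr, rfl, hbody⟩)

end DLP
end

section
/- Every canonical answer set of a dl-program K = (O,P) is a strong answer set of K. -/
namespace DLP

variable {Conc Pred Arg : Type}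

/-!
Let `J` be the least model of the positive program `sP_O^I`. Since `I` satisfies `COMP(K)` it is
a model of `sP_O^I`, so `J ⊆ I`, and it remains to show that `D = I \ J` is empty. An atom of `D`
is supported by a rule whose transformed body holds in `I` but fails in `J`; adding the atoms of
`D` to `J` one at a time, some body member flips from false to true, which is a canonical edge
into `D`. So `D` contains a terminal loop `L`. The rule provided by `cLF(L, I, K)` has its
transformed body true in `I \ L ⊇ J`, and if it failed in `J` the same flipping would give an edge
from `L` into `D \ L`. Hence its head, an atom of `L`, lies in `J`: a contradiction.
-/
lemma exists_flip_of_subset {α : Type} (p : Set α → Prop) {S T : Set α} (hST : S ⊆ T)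
    (hfin : (T \ S).Finite) (hS : ¬ p S) (hT : p T) :
    ∃ v ∈ T \ S, ∃ W, ¬ p W ∧ p (W ∪ {v}) := by
  suffices key : ∀ F : Set α, F.Finite → p (S ∪ F) → ∃ v ∈ F, ∃ W, ¬ p W ∧ p (W ∪ {v}) from
    key (T \ S) hfin (by rwa [Set.union_sdiff_cancel hST])
  intro F hF
  induction F, hF using Set.Finite.induction_on with
  | empty => simpa using hS
  | @insert a F _ _ ih =>
    intro hins
    by_cases hF : p (S ∪ F)
    · obtain ⟨v, hv, hflip⟩ := ih hF
      exact ⟨v, Set.mem_insert_of_mem a hv, hflip⟩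
    · refine ⟨a, Set.mem_insert a F, S ∪ F, hF, ?_⟩
      rwa [Set.union_assoc, Set.union_singleton]

/-- The loop `L` is a terminal strongly connected component of the subgraph induced on `D`. -/
lemma exists_isLoop_closed {α : Type} (E : α → α → Prop) {D : Set α} (hfin : D.Finite)
    (hne : D.Nonempty) (hout : ∀ a ∈ D, ∃ b ∈ D, E a b) :
    ∃ L ⊆ D, IsLoop E L ∧ ∀ a ∈ L, ∀ b ∈ D, E a b → b ∈ L := by
  let R : α → α → Prop := fun a b => E a b ∧ b ∈ D
  -- `x` is maximal for reachability: whatever it reaches inside `D` reaches it back.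
  let _ : LE α := ⟨Relation.ReflTransGen R⟩
  have : IsTrans α (· ≤ ·) := ⟨fun _ _ _ => Relation.ReflTransGen.trans⟩
  obtain ⟨x, hxD, hxmax⟩ := hfin.exists_maximal hne
  let L : Set α := {y | Relation.ReflTransGen R x y}
  have hLD : L ⊆ D := fun y hy => by
    rcases Relation.ReflTransGen.cases_tail hy with rfl | ⟨_, _, _, hyD⟩
    exacts [hxD, hyD]
  have hclosed : ∀ a ∈ L, ∀ b ∈ D, E a b → b ∈ L := fun a ha b hb hab => ha.tail ⟨hab, hb⟩
  have hrestrict : ∀ s ∈ L, ∀ v, Relation.ReflTransGen R s v →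
      Relation.ReflTransGen (fun a b => E a b ∧ a ∈ L ∧ b ∈ L) s v := by
    intro s hs v hsv
    induction hsv with
    | refl => exact .refl
    | tail hsb hbc ih =>
      exact ih.tail ⟨hbc.1, hs.trans hsb, (hs.trans hsb).tail hbc⟩
  refine ⟨L, hLD, ⟨⟨x, .refl⟩, fun u hu v hv => ?_⟩, hclosed⟩
  obtain ⟨s, hsD, hus⟩ := hout u (hLD hu)
  have hsL : s ∈ L := hclosed u hu s hsD hus
  have hsx : Relation.ReflTransGen R s x := hxmax hsD hsL
  exact Relation.TransGen.head' ⟨hus, hu, hsL⟩ (hrestrict s hsL v (hsx.trans hv))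

lemma satB_mono_of_positive {I J : Interp Pred Arg} (hIJ : I ⊆ J) {b : BodyElem Conc Pred Arg}
    (hb : ∀ d, b = Sum.inr d → d.Mono) (hI : satB I b) : satB J b := by
  cases b with
  | inl a => exact hIJ hI
  | inr d => exact hb d rfl hIJ hI

lemma Positive.isModel_sInter {P : Prog Conc Pred Arg} (hP : Positive P) :
    isModel P (⋂₀ {J | isModel P J}) := by
  intro r hr hbody
  refine Set.mem_sInter.mpr fun N hN => hN r hr ⟨fun b hb => ?_, by simp [hP.1 r hr]⟩
  refine satB_mono_of_positive (Set.sInter_subset_of_mem hN) ?_ (hbody.1 b hb)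
  rintro d rfl
  exact hP.2 r hr d (Or.inl hb)

/-- The rule of `sP_O^I` obtained from `r`. -/
def Rule.monoReduct (r : Rule Conc Pred Arg) : Rule Conc Pred Arg :=
  ⟨r.head, {b ∈ r.pos | (∃ a, b = Sum.inl a) ∨ ∃ d : DLA Conc Pred Arg, b = Sum.inr d ∧ d.Mono},
    ∅⟩

lemma monoReduct_mem_strongReduct {P : Prog Conc Pred Arg} {I : Interp Pred Arg}
    {r : Rule Conc Pred Arg} (hr : r ∈ P.rules) (hI : satBody I r) :
    r.monoReduct ∈ (strongReduct P I).rules :=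
  ⟨r, hr, fun _ hd _ => hI.1 _ hd, hI.2, rfl⟩

lemma positive_strongReduct (P : Prog Conc Pred Arg) (I : Interp Pred Arg) :
    Positive (strongReduct P I) := by
  constructor
  · rintro _ ⟨r, -, -, -, rfl⟩
    rfl
  · rintro _ ⟨r, -, -, -, rfl⟩ d (⟨-, ⟨a, ha⟩ | ⟨d', hd', hmono⟩⟩ | hneg)
    · cases ha
    · cases hd'
      exact hmono
    · cases hneg

lemma isModel_strongReduct_of_satComp {P : Prog Conc Pred Arg} {I : Interp Pred Arg}
    (hcomp : satComp P I) : isModel (strongReduct P I) I := by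
  rintro _ ⟨r, hr, hnonmono, hneg, rfl⟩ hbody
  refine (hcomp r.head).mpr ⟨r, hr, rfl, fun b hb => ?_, hneg⟩
  by_cases hmem : b ∈ r.monoReduct.pos
  · exact hbody.1 b hmem
  · obtain ⟨d, rfl, hd⟩ : ∃ d, b = Sum.inr d ∧ ¬ d.Mono := by
      cases b with
      | inl a => exact absurd ⟨hb, Or.inl ⟨a, rfl⟩⟩ hmem
      | inr d => exact ⟨d, rfl, fun hd => hmem ⟨hb, Or.inr ⟨d, rfl, hd⟩⟩⟩
    exact hnonmono d hb hd

lemma exists_edgeCanon_of_head_not_mem {P : Prog Conc Pred Arg} {I J T : Interp Pred Arg}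
    (hJ : isModel (strongReduct P I) J) {r : Rule Conc Pred Arg} (hr : r ∈ P.rules)
    (hI : satBody I r) (hJT : J ⊆ T) (hfin : (T \ J).Finite)
    (hT : ∀ b ∈ r.monoReduct.pos, satB T b) (hhead : r.head ∉ J) :
    ∃ v ∈ T \ J, edgeCanon P r.head v := by
  have hJbody : ¬ ∀ b ∈ r.monoReduct.pos, satB J b := fun hpos =>
    hhead (hJ r.monoReduct (monoReduct_mem_strongReduct hr hI)
      ⟨hpos, fun _ hb => absurd hb (Set.notMem_empty _)⟩)
  push Not at hJbody
  obtain ⟨b, hb, hbJ⟩ := hJbody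
  obtain ⟨v, hv, W, hflip⟩ := exists_flip_of_subset (satB · b) hJT hfin hbJ (hT b hb)
  exact ⟨v, hv, r, hr, rfl, Or.inl ⟨b, hb.1, W, hflip⟩⟩

lemma extIF_eq (I L : Interp Pred Arg) : extIF I L = extOf (I \ L) := by
  funext p
  ext e
  by_cases hp : ∃ e', (p, e') ∈ L
  · simp [extIF, extOf, hp]
  · have he : (p, e) ∉ L := fun he => hp ⟨e, he⟩
    simp [extIF, extOf, hp, he]

lemma satB_sdiff_of_satDelta1 {I L : Interp Pred Arg} {r : Rule Conc Pred Arg}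
    (hnoL : ∀ a ∈ L, Sum.inl a ∉ r.pos) (hδ : ∀ b ∈ r.pos, satDelta1 I L b) :
    ∀ b ∈ r.monoReduct.pos, satB (I \ L) b := by
  rintro _ ⟨hb, ⟨a, rfl⟩ | ⟨d, rfl, hmono⟩⟩
  · exact ⟨hδ _ hb, fun haL => hnoL a haL hb⟩
  · have hIF : satIF d I L := (hδ _ hb).2 hmono
    rwa [satIF, extIF_eq] at hIF

/-- Every canonical answer set of a dl-program is a strong answer set. -/
theorem stmt17 {Conc Pred Arg : Type} [Fintype Pred] [Fintype Arg]
    (K : Prog Conc Pred Arg) (I : Interp Pred Arg) (h : CanonAS K I) :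
    StrongAS K I := by
  obtain ⟨hcomp, hloop⟩ := h
  set J : Interp Pred Arg := ⋂₀ {N | isModel (strongReduct K I) N}
  have hJ : isModel (strongReduct K I) J := (positive_strongReduct K I).isModel_sInter
  have hJI : J ⊆ I := Set.sInter_subset_of_mem (isModel_strongReduct_of_satComp hcomp)
  suffices hIJ : I ⊆ J from
    ⟨isModel_strongReduct_of_satComp hcomp, fun N hN => hIJ.trans (Set.sInter_subset_of_mem hN)⟩
  by_contra hIJ
  have hout : ∀ a ∈ I \ J, ∃ v ∈ I \ J, edgeCanon K a v := by
    rintro a ⟨haI, haJ⟩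
    obtain ⟨r, hr, rfl, hbody⟩ := (hcomp a).mp haI
    exact exists_edgeCanon_of_head_not_mem hJ hr hbody hJI (Set.toFinite _)
      (fun b hb => hbody.1 b hb.1) haJ
  obtain ⟨L, hLD, hL, hclosed⟩ := exists_isLoop_closed (edgeCanon K) (Set.toFinite (I \ J))
    (Set.sdiff_nonempty.mpr hIJ) hout
  obtain ⟨x, hx⟩ := hL.1
  obtain ⟨r, hr, hheadL, hnoL, hbody, hδ, -⟩ := hloop L hL ⟨x, hx, (hLD hx).1⟩
  obtain ⟨v, ⟨⟨hvI, hvL⟩, hvJ⟩, hedge⟩ :=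
    exists_edgeCanon_of_head_not_mem (T := I \ L) hJ hr hbody
    (fun a ha => ⟨hJI ha, fun haL => (hLD haL).2 ha⟩) (Set.toFinite _)
    (satB_sdiff_of_satDelta1 hnoL hδ) (hLD hheadL).2
  exact hvL (hclosed r.head hheadL v (Set.mem_sdiff_of_mem hvI hvJ) hedge)

end DLP
end
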